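/- Let i, j ∈ S with v(S) > v(S \ {i}) and v(S) > v(S \ {j}), and let (S \ {j}, y) be an objection of i against j at payoff vector x. If x_j − x_i ≤ p({j}) − p({i}) − Cost(S \ {i}) + Cost(S \ {j}), then there exists a counter-objection (Q, z) with Q = S \ {i} of j against i. -/

import Mathlib

/-!
Keep `y` on the members of `S \ {i}` that `i`'s objection covers and give `j` its old payoff
`x j`. This is feasible for `S \ {i}` because `i` gains strictly from the objection,
so `∑_{S \ {i, j}} y < v(S \ {j}) - x i`, and the hypothesis on `x j - x i` says exactly
that `v(S \ {i}) - v(S \ {j})` is at least `x j - x i`.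
-/

/-- An objection of `i` against `j` at payoff vector `x`. -/
def IsObjection {ι : Type*} [DecidableEq ι] (v : Finset ι → ℝ) (x : ι → ℝ)
    (i j : ι) (P : Finset ι) (y : ι → ℝ) : Prop :=
  i ∈ P ∧ j ∉ P ∧ (∑ k ∈ P, y k) ≤ v P ∧ (∀ k ∈ P, x k ≤ y k) ∧ x i < y i

/-- A counter-objection of `j` against the objection `(P, y)` of `i`. -/
def IsCounterObjection {ι : Type*} [DecidableEq ι] (v : Finset ι → ℝ) (x : ι → ℝ)
    (i j : ι) (P : Finset ι) (y : ι → ℝ) (Q : Finset ι) (z : ι → ℝ) : Prop :=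
  j ∈ Q ∧ i ∉ Q ∧ (∑ k ∈ Q, z k) ≤ v Q ∧
    (∀ k ∈ Q \ P, x k ≤ z k) ∧ (∀ k ∈ Q ∩ P, y k ≤ z k)

open Finset

section CounterObjection

variable {ι : Type*} [DecidableEq ι] {v : Finset ι → ℝ} {x y : ι → ℝ} {i j : ι}
  {P Q : Finset ι}

theorem IsObjection.sum_erase_lt (h : IsObjection v x i j P y) :
    ∑ k ∈ P.erase i, y k < v P - x i := by
  obtain ⟨hiP, -, hsum, -, hgain⟩ := h
  rw [sum_erase_eq_sub hiP]
  linarith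

theorem isCounterObjection_piecewise (hjQ : j ∈ Q) (hiQ : i ∉ Q)
    (hsum : ∑ k ∈ Q ∩ P, y k + ∑ k ∈ Q \ P, x k ≤ v Q) :
    IsCounterObjection v x i j P y Q (P.piecewise y x) := by
  refine ⟨hjQ, hiQ, by rwa [sum_piecewise], fun k hk => ?_, fun k hk => ?_⟩
  · rw [piecewise_eq_of_notMem _ _ _ (mem_sdiff.1 hk).2]
  · rw [piecewise_eq_of_mem _ _ _ (mem_inter.1 hk).2]

end CounterObjection

theorem counter_objection_sufficient_condition_general {ι : Type*} [DecidableEq ι]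
    (S : Finset ι) (c : ι → ℝ) (Cost : Finset ι → ℝ)
    (x : ι → ℝ) (i j : ι) (hi : i ∈ S) (hj : j ∈ S) (hij : i ≠ j)
    (v : Finset ι → ℝ) (hv : ∀ C : Finset ι, v C = (∑ k ∈ C, c k) - Cost C)
    (y : ι → ℝ)
    (hobj : IsObjection v x i j (S.erase j) y)
    (hcond : x j - x i ≤ c j - c i - Cost (S.erase i) + Cost (S.erase j)) :
    ∃ z : ι → ℝ, IsCounterObjection v x i j (S.erase j) y (S.erase i) z := by
  have hv_diff :
      v (S.erase i) - v (S.erase j) = c j - c i - Cost (S.erase i) + Cost (S.erase j) := by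
    rw [hv, hv, sum_erase_eq_sub hi, sum_erase_eq_sub hj]
    ring
  refine ⟨_,
    isCounterObjection_piecewise (mem_erase.2 ⟨hij.symm, hj⟩) (notMem_erase i S) ?_⟩
  rw [erase_inter, inter_eq_right.2 (erase_subset j S), erase_sdiff_erase hij hj, sum_singleton]
  linarith [hobj.sum_erase_lt]

/-- Lemma 2 of the paper: the inequality
`x_j − x_i ≤ p({j}) − p({i}) − Cost(S\{i}) + Cost(S\{j})` is a sufficient
condition for the existence of a counter-objection `(S \ {i}, z)` of `j`
against `i` to any objection `(S \ {j}, y)` of `i` against `j`. -/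
theorem counter_objection_sufficient_condition {ι : Type*} [DecidableEq ι]
    (S : Finset ι) (c : ι → ℝ) (Cost : Finset ι → ℝ)
    (x : ι → ℝ) (i j : ι) (hi : i ∈ S) (hj : j ∈ S) (hij : i ≠ j)
    (v : Finset ι → ℝ) (hv : ∀ C : Finset ι, v C = (∑ k ∈ C, c k) - Cost C)
    (hgapi : v (S.erase i) < v S)
    (hgapj : v (S.erase j) < v S)
    (y : ι → ℝ)
    (hobj : IsObjection v x i j (S.erase j) y)
    (hcond : x j - x i ≤ c j - c i - Cost (S.erase i) + Cost (S.erase j)) :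
    ∃ z : ι → ℝ, IsCounterObjection v x i j (S.erase j) y (S.erase i) z :=
  counter_objection_sufficient_condition_general S c Cost x i j hi hj hij v hv y hobj hcond
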